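/- arXiv:2605.13313 — 8 statements merged into one kernel-verified Lean document; each statement's English description precedes it below -/
import Mathlib

section
/- Let c > 0 and let λ : ℝ² → ℝ and u : ℝ² → ℝ be smooth functions of (t,x) such that u satisfies the damped sine–Gordon equation with prescribed damping profile: ∂²u/∂t² − c²·∂²u/∂x² + sin u + λ(t,x)·∂u/∂t = 0 everywhere. Define pt := ∂u/∂t, px := −c²·∂u/∂x, zt := λ, and zx(t,x) := ∫₀ˣ [ ½((∂u/∂t)² − c²(∂u/∂y)²) − (1 − cos u) − ½λ² − ∂λ/∂t ](t,y) dy. Then all the Hamilton–De Donder–Weyl equations for the Hamiltonian h = ½(pt² − px²/c²) + (1 − cos u) + ½(zt)² hold: (i) ∂u/∂t = pt; (ii) ∂u/∂x = −px/c²; (iii) ∂pt/∂t + ∂px/∂x = −(sin u + zt·pt); (iv) ∂zt/∂t + ∂zx/∂x = ½(pt² − px²/c²) − (1 − cos u) − ½(zt)². -/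
/-- Partial derivative with respect to the first (time) variable. -/
noncomputable def pdt (f : ℝ → ℝ → ℝ) : ℝ → ℝ → ℝ := fun t x => deriv (fun s => f s x) t
/-- Partial derivative with respect to the second (space) variable. -/
noncomputable def pdx (f : ℝ → ℝ → ℝ) : ℝ → ℝ → ℝ := fun t x => deriv (fun y => f t y) x

lemma pdt_eq_fderiv {f : ℝ → ℝ → ℝ} (hf : ContDiff ℝ (⊤ : ℕ∞) (Function.uncurry f)) (t x : ℝ) :
    pdt f t x = fderiv ℝ (Function.uncurry f) (t, x) (1, 0) := by
  have h1 : HasFDerivAt (Function.uncurry f) (fderiv ℝ (Function.uncurry f) (t, x)) (t, x) :=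
    (hf.differentiable (by simp) (t, x)).hasFDerivAt
  have h2 : HasDerivAt (fun s : ℝ => (s, x)) ((1 : ℝ), (0 : ℝ)) t :=
    HasDerivAt.prodMk (hasDerivAt_id t) (hasDerivAt_const t x)
  exact (h1.comp_hasDerivAt t h2).deriv

lemma pdx_eq_fderiv {f : ℝ → ℝ → ℝ} (hf : ContDiff ℝ (⊤ : ℕ∞) (Function.uncurry f)) (t x : ℝ) :
    pdx f t x = fderiv ℝ (Function.uncurry f) (t, x) (0, 1) := by
  have h1 : HasFDerivAt (Function.uncurry f) (fderiv ℝ (Function.uncurry f) (t, x)) (t, x) :=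
    (hf.differentiable (by simp) (t, x)).hasFDerivAt
  have h2 : HasDerivAt (fun y : ℝ => (t, y)) ((0 : ℝ), (1 : ℝ)) x :=
    HasDerivAt.prodMk (hasDerivAt_const x t) (hasDerivAt_id x)
  exact (h1.comp_hasDerivAt x h2).deriv

lemma pdt_continuous {f : ℝ → ℝ → ℝ} (hf : ContDiff ℝ (⊤ : ℕ∞) (Function.uncurry f)) :
    Continuous (Function.uncurry (pdt f)) := by
  have : Function.uncurry (pdt f)
      = fun p : ℝ × ℝ => fderiv ℝ (Function.uncurry f) p (1, 0) := by
    funext p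
    exact pdt_eq_fderiv hf p.1 p.2
  rw [this]
  exact (hf.continuous_fderiv (by simp)).clm_apply continuous_const

lemma pdx_continuous {f : ℝ → ℝ → ℝ} (hf : ContDiff ℝ (⊤ : ℕ∞) (Function.uncurry f)) :
    Continuous (Function.uncurry (pdx f)) := by
  have : Function.uncurry (pdx f)
      = fun p : ℝ × ℝ => fderiv ℝ (Function.uncurry f) p (0, 1) := by
    funext p
    exact pdx_eq_fderiv hf p.1 p.2
  rw [this]
  exact (hf.continuous_fderiv (by simp)).clm_apply continuous_const

/-- a solution of the damped sine--Gordon equation with a prescribed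
space-time damping profile `λ(t,x)` lifts to a solution of the full two-contact
Hamilton--De Donder--Weyl system for the Hamiltonian with quadratic dependence
on the dissipative variable `zt`, choosing `zx` by an explicit integral. -/
theorem damped_sine_gordon_prescribed_damping_lifts
    (c : ℝ) (hc : 0 < c)
    (lam u : ℝ → ℝ → ℝ)
    (hlam : ContDiff ℝ (⊤ : ℕ∞) (Function.uncurry lam))
    (hu : ContDiff ℝ (⊤ : ℕ∞) (Function.uncurry u))
    (hsol : ∀ t x, pdt (pdt u) t x - c ^ 2 * pdx (pdx u) t x
      + Real.sin (u t x) + lam t x * pdt u t x = 0) :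
    let pt : ℝ → ℝ → ℝ := fun t x => pdt u t x
    let px : ℝ → ℝ → ℝ := fun t x => -(c ^ 2) * pdx u t x
    let zt : ℝ → ℝ → ℝ := lam
    let zx : ℝ → ℝ → ℝ := fun t x => ∫ y in (0:ℝ)..x,
      (2⁻¹ * ((pdt u t y) ^ 2 - c ^ 2 * (pdx u t y) ^ 2) - (1 - Real.cos (u t y))
        - 2⁻¹ * (lam t y) ^ 2 - pdt lam t y)
    (∀ t x, pdt u t x = pt t x) ∧
    (∀ t x, pdx u t x = -(px t x) / c ^ 2) ∧
    (∀ t x, pdt pt t x + pdx px t x = -(Real.sin (u t x) + zt t x * pt t x)) ∧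
    (∀ t x, pdt zt t x + pdx zx t x
      = 2⁻¹ * ((pt t x) ^ 2 - (px t x) ^ 2 / c ^ 2) - (1 - Real.cos (u t x))
        - 2⁻¹ * (zt t x) ^ 2) := by
  intro pt px zt zx
  have hc2 : (c : ℝ) ^ 2 ≠ 0 := pow_ne_zero 2 hc.ne'
  refine ⟨fun t x => rfl, ?_, ?_, ?_⟩
  · intro t x
    show pdx u t x = -(-(c ^ 2) * pdx u t x) / c ^ 2
    field_simp
  · intro t x
    have hpx : pdx px t x = -(c ^ 2) * pdx (pdx u) t x := by
      show deriv (fun y => -(c ^ 2) * pdx u t y) x = _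
      rw [deriv_const_mul_field]
      rfl
    have := hsol t x
    show pdt (pdt u) t x + pdx px t x = -(Real.sin (u t x) + lam t x * pdt u t x)
    rw [hpx]
    linarith
  · intro t x
    have hcont : Continuous (fun y =>
        2⁻¹ * ((pdt u t y) ^ 2 - c ^ 2 * (pdx u t y) ^ 2) - (1 - Real.cos (u t y))
          - 2⁻¹ * (lam t y) ^ 2 - pdt lam t y) := by
      have hty : Continuous (fun y : ℝ => (t, y)) := continuous_const.prodMk continuous_id
      have h1 : Continuous (fun y => pdt u t y) := (pdt_continuous hu).comp hty
      have h2 : Continuous (fun y => pdx u t y) := (pdx_continuous hu).comp hty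
      have h3 : Continuous (fun y => pdt lam t y) := (pdt_continuous hlam).comp hty
      have h4 : Continuous (fun y => u t y) := hu.continuous.comp hty
      have h5 : Continuous (fun y => lam t y) := hlam.continuous.comp hty
      fun_prop
    have hderiv : pdx zx t x
        = 2⁻¹ * ((pdt u t x) ^ 2 - c ^ 2 * (pdx u t x) ^ 2) - (1 - Real.cos (u t x))
          - 2⁻¹ * (lam t x) ^ 2 - pdt lam t x := by
      exact Continuous.deriv_integral _ hcont 0 x
    show pdt lam t x + pdx zx t x
        = 2⁻¹ * ((pdt u t x) ^ 2 - (-(c ^ 2) * pdx u t x) ^ 2 / c ^ 2)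
          - (1 - Real.cos (u t x)) - 2⁻¹ * (lam t x) ^ 2
    rw [hderiv]
    field_simp
    ring
end

section
/- Let ν > 0 and λ ≥ 0 be constants and let V : ℝ → ℝ be a smooth function. Let u, v, px, qx : ℝ² → ℝ be smooth functions of (t,x) satisfying: ∂v/∂t − ∂px/∂x = v·(V''(u) + λ); −∂u/∂t − ∂qx/∂x = V'(u) + λ·u; ∂u/∂x = −qx/ν; and ∂v/∂x = −px/ν at every point. Then u satisfies the Allen–Cahn-type reaction–diffusion equation ∂u/∂t − ν·∂²u/∂x² + V'(u) + λ·u = 0, and v satisfies the complementary equation ∂v/∂t + ν·∂²v/∂x² = v·(V''(u) + λ), at every point of ℝ². -/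
/-- solutions of the two-contact HdDW system for the Allen--Cahn
type Hamiltonian satisfy the Allen--Cahn reaction--diffusion equation for `u`
and the complementary equation for the auxiliary field `v`. -/
theorem allen_cahn_from_HdDW
    (ν lam : ℝ) (hν : 0 < ν) (hlam : 0 ≤ lam)
    (V : ℝ → ℝ) (hV : ContDiff ℝ (⊤ : ℕ∞) V)
    (u v px qx : ℝ → ℝ → ℝ)
    (hu : ContDiff ℝ (⊤ : ℕ∞) (Function.uncurry u))
    (hv : ContDiff ℝ (⊤ : ℕ∞) (Function.uncurry v))
    (hpx : ContDiff ℝ (⊤ : ℕ∞) (Function.uncurry px))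
    (hqx : ContDiff ℝ (⊤ : ℕ∞) (Function.uncurry qx))
    (h1 : ∀ t x, pdt v t x - pdx px t x = v t x * (deriv (deriv V) (u t x) + lam))
    (h2 : ∀ t x, -pdt u t x - pdx qx t x = deriv V (u t x) + lam * u t x)
    (h3 : ∀ t x, pdx u t x = -(qx t x) / ν)
    (h4 : ∀ t x, pdx v t x = -(px t x) / ν) :
    (∀ t x, pdt u t x - ν * pdx (pdx u) t x + deriv V (u t x) + lam * u t x = 0) ∧
    (∀ t x, pdt v t x + ν * pdx (pdx v) t x = v t x * (deriv (deriv V) (u t x) + lam)) := by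
  have hν' : ν ≠ 0 := ne_of_gt hν
  have key : ∀ (f g : ℝ → ℝ → ℝ), (∀ t x, pdx f t x = -(g t x) / ν) →
      ∀ t x, pdx (pdx f) t x = -(pdx g t x) / ν := by
    intro f g h t x
    have : (fun y => pdx f t y) = fun y => -(g t y) / ν := funext fun y => h t y
    show deriv (fun y => pdx f t y) x = -(pdx g t x) / ν
    rw [this]
    simp only [neg_div]
    rw [deriv.fun_neg]
    rw [deriv_div_const]
    rfl
  constructor
  · intro t x
    have := key u qx h3 t x
    rw [this]
    have h2' := h2 t x
    have e : ν * (-pdx qx t x / ν) = -pdx qx t x := by field_simp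
    rw [e]; linarith
  · intro t x
    have := key v px h4 t x
    rw [this]
    have h1' := h1 t x
    have e : ν * (-pdx px t x / ν) = -pdx px t x := by field_simp
    rw [e]; linarith
end

section
/- Let D, B, C : ℝ → ℝ be smooth functions with D(r) ≠ 0 for every r ∈ ℝ. Let u, pu, pv, zx : ℝ² → ℝ be smooth functions of (t,x) satisfying: ∂u/∂x = −pv/D(u); and −∂u/∂t − ∂pv/∂x = C(u) − (B(u)/D(u))·pv at every point. Then u satisfies the generalized Burgers-type convection–diffusion–reaction equation ∂u/∂t − ∂/∂x ( D(u)·∂u/∂x ) + B(u)·∂u/∂x + C(u) = 0 at every point of ℝ². In particular, for D(u) = ν > 0 constant, B(u) = u, and C(u) = 0 one obtains the viscous Burgers equation ∂u/∂t + u·∂u/∂x = ν·∂²u/∂x². -/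
/-- solutions of the relevant two-contact HdDW equations yield the
generalized Burgers-type convection--diffusion--reaction equation; in particular,
for `D = ν`, `B(u) = u`, `C = 0` one obtains the viscous Burgers equation. -/
theorem generalized_burgers_from_HdDW
    (D B C : ℝ → ℝ)
    (hD : ContDiff ℝ (⊤ : ℕ∞) D) (hB : ContDiff ℝ (⊤ : ℕ∞) B) (hC : ContDiff ℝ (⊤ : ℕ∞) C)
    (hDne : ∀ r : ℝ, D r ≠ 0)
    (u pu pv zx : ℝ → ℝ → ℝ)
    (hu : ContDiff ℝ (⊤ : ℕ∞) (Function.uncurry u))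
    (hpu : ContDiff ℝ (⊤ : ℕ∞) (Function.uncurry pu))
    (hpv : ContDiff ℝ (⊤ : ℕ∞) (Function.uncurry pv))
    (hzx : ContDiff ℝ (⊤ : ℕ∞) (Function.uncurry zx))
    (h1 : ∀ t x, pdx u t x = -(pv t x) / D (u t x))
    (h2 : ∀ t x, -pdt u t x - pdx pv t x = C (u t x) - (B (u t x) / D (u t x)) * pv t x) :
    (∀ t x, pdt u t x - pdx (fun t x => D (u t x) * pdx u t x) t x
        + B (u t x) * pdx u t x + C (u t x) = 0) ∧
    (∀ ν : ℝ, 0 < ν → (∀ r, D r = ν) → (∀ r, B r = r) → (∀ r, C r = 0) →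
      ∀ t x, pdt u t x + u t x * pdx u t x = ν * pdx (pdx u) t x) := by
  have key : ∀ t x, D (u t x) * pdx u t x = -(pv t x) := by
    intro t x
    rw [h1, mul_comm, div_mul_cancel₀ _ (hDne (u t x))]
  have main : ∀ t x, pdx (fun t x => D (u t x) * pdx u t x) t x = -pdx pv t x := by
    intro t x
    have hfe : (fun y => D (u t y) * pdx u t y) = fun y => -(pv t y) := by
      funext y; exact key t y
    simp only [pdx] at hfe ⊢
    rw [hfe, deriv.fun_neg]
  have part1 : ∀ t x, pdt u t x - pdx (fun t x => D (u t x) * pdx u t x) t x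
      + B (u t x) * pdx u t x + C (u t x) = 0 := by
    intro t x
    have hBpv : B (u t x) / D (u t x) * pv t x = -(B (u t x) * pdx u t x) := by
      rw [h1]
      field_simp
    have h := h2 t x
    rw [main t x]
    rw [hBpv] at h
    linarith
  refine ⟨part1, ?_⟩
  intro ν hν hDν hBν hCν t x
  have h := part1 t x
  have hx : pdx (fun t x => D (u t x) * pdx u t x) t x = ν * pdx (pdx u) t x := by
    simp only [pdx, hDν]
    rw [deriv_const_mul_field]
  rw [hx, hBν, hCν] at h
  linarith
end

section
/- Let m > 1 and b ≥ 0 be real constants. Let u : ℝ² → ℝ be a smooth solution of the porous medium equation with linear absorption ∂u/∂t = ∂²(u^m)/∂x² − b·u with u(t,x) > 0 everywhere. Define v := 0, px := 0, qx := −∂(u^m)/∂x, zt := 0, zx := 0. Then all the Hamilton–De Donder–Weyl equations of the porous-medium two-contact system hold: (i) ∂v/∂t − ∂px/∂x = ((m−1)/(m·u^m))·px·qx − b·v; (ii) −∂u/∂t − ∂qx/∂x = b·u; (iii) ∂u/∂x = −qx/(m·u^{m−1}); (iv) ∂v/∂x = −px/(m·u^{m−1}); (v) ∂zt/∂t + ∂zx/∂x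 = ½(−v·∂u/∂t + u·∂v/∂t) + px·∂u/∂x + qx·∂v/∂x − h, where h = −(1/(m·u^{m−1}))·px·qx + 2b·zt. -/
/-- every positive solution of the porous medium equation with
linear absorption lifts, via the consistent reduction `v = 0`, `px = 0`,
`qx = -(u^m)ₓ`, `zt = zx = 0`, to a solution of the full two-contact
Hamilton--De Donder--Weyl system. -/
theorem porous_medium_consistent_reduction
    (m b : ℝ) (hm : 1 < m) (hb : 0 ≤ b)
    (u : ℝ → ℝ → ℝ)
    (hu : ContDiff ℝ (⊤ : ℕ∞) (Function.uncurry u))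
    (hupos : ∀ t x, 0 < u t x)
    (hsol : ∀ t x, pdt u t x = pdx (pdx (fun t x => u t x ^ m)) t x - b * u t x) :
    let v : ℝ → ℝ → ℝ := fun _ _ => 0
    let px : ℝ → ℝ → ℝ := fun _ _ => 0
    let qx : ℝ → ℝ → ℝ := fun t x => -(pdx (fun t x => u t x ^ m) t x)
    let zt : ℝ → ℝ → ℝ := fun _ _ => 0
    let zx : ℝ → ℝ → ℝ := fun _ _ => 0
    (∀ t x, pdt v t x - pdx px t x
      = ((m - 1) / (m * u t x ^ m)) * px t x * qx t x - b * v t x) ∧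
    (∀ t x, -pdt u t x - pdx qx t x = b * u t x) ∧
    (∀ t x, pdx u t x = -(qx t x) / (m * u t x ^ (m - 1))) ∧
    (∀ t x, pdx v t x = -(px t x) / (m * u t x ^ (m - 1))) ∧
    (∀ t x, pdt zt t x + pdx zx t x
      = 2⁻¹ * (-(v t x) * pdt u t x + u t x * pdt v t x)
        + px t x * pdx u t x + qx t x * pdx v t x
        - (-(1 / (m * u t x ^ (m - 1))) * px t x * qx t x + 2 * b * zt t x)) := by
  intro v px qx zt zx
  have hdx : ∀ t x, HasDerivAt (fun y => u t y) (pdx u t x) x := by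
    intro t x
    have hc : ContDiff ℝ (⊤ : ℕ∞) (fun y => u t y) := by
      have := hu.comp ((contDiff_const (c := t)).prodMk contDiff_id)
      exact this
    exact ((hc.differentiable (by simp)) x).hasDerivAt
  have key : ∀ t x, pdx (fun t x => u t x ^ m) t x
      = m * u t x ^ (m - 1) * pdx u t x := by
    intro t x
    have h := (hdx t x).rpow_const (p := m) (Or.inl (hupos t x).ne')
    show deriv (fun y => u t y ^ m) x = _
    rw [h.deriv]; ring
  have hne : ∀ t x, m * u t x ^ (m - 1) ≠ 0 := by
    intro t x
    have h1 : (0:ℝ) < u t x ^ (m - 1) := Real.rpow_pos_of_pos (hupos t x) _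
    positivity
  refine ⟨?_, ?_, ?_, ?_, ?_⟩
  · intro t x; simp [pdt, pdx, px, qx, v]
  · intro t x
    have h := hsol t x
    simp only [pdx, qx] at *
    have : deriv (fun y => -(deriv (fun y' => u t y' ^ m) y)) x
        = -(deriv (fun y => (deriv (fun y' => u t y' ^ m) y)) x) := deriv.neg
    rw [this]
    linarith [h]
  · intro t x
    simp only [qx, neg_neg, key t x]
    rw [eq_div_iff (hne t x)]; ring
  · intro t x; simp [pdx, v, px]
  · intro t x; simp [pdt, pdx, v, px, qx, zt, zx]
end

section
/- Let α, β, γ ∈ ℝ and define R_a(a,b) := a − (a² + b²)·a + β·(a² + b²)·b and R_b(a,b) := b − β·(a² + b²)·a − (a² + b²)·b. Let a, b, qa, qb : ℝ² → ℝ be smooth functions of (t,x) satisfying: −∂a/∂t − ∂qa/∂x = −R_a(a,b) + γ·a; −∂b/∂t − ∂qb/∂x = −R_b(a,b) + γ·b; ∂a/∂x = −(qa + α·qb)/(1 + α²); and ∂b/∂x = −(−α·qa + qb)/(1 + α²) at every point. Then (a,b) satisfies the real form of the complex Ginzburg–Landau equation: ∂a/∂t = ∂²a/∂x² − α·∂²b/∂x²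 + R_a(a,b) − γ·a and ∂b/∂t = α·∂²a/∂x² + ∂²b/∂x² + R_b(a,b) − γ·b, i.e., ψ := a + i·b satisfies ∂ψ/∂t = (1 + iα)·∂²ψ/∂x² + (1 − γ)·ψ − (1 + iβ)·|ψ|²·ψ. -/
/-- Partial derivative in the time direction for complex-valued fields. -/
noncomputable def pdtC (f : ℝ → ℝ → ℂ) : ℝ → ℝ → ℂ := fun t x => deriv (fun s => f s x) t
/-- Partial derivative in the space direction for complex-valued fields. -/
noncomputable def pdxC (f : ℝ → ℝ → ℂ) : ℝ → ℝ → ℂ := fun t x => deriv (fun y => f t y) x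

/-- The reaction term `R_a` of the real form of the complex Ginzburg--Landau equation. -/
def Ra (β a b : ℝ) : ℝ := a - (a ^ 2 + b ^ 2) * a + β * (a ^ 2 + b ^ 2) * b
/-- The reaction term `R_b` of the real form of the complex Ginzburg--Landau equation. -/
def Rb (β a b : ℝ) : ℝ := b - β * (a ^ 2 + b ^ 2) * a - (a ^ 2 + b ^ 2) * b

/-- solutions of the relevant two-contact HdDW equations satisfy
the real form of the complex Ginzburg--Landau equation, i.e. `ψ = a + i b`
satisfies the complex Ginzburg--Landau equation. -/
theorem complex_ginzburg_landau_from_HdDW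
    (α β γ : ℝ)
    (a b qa qb : ℝ → ℝ → ℝ)
    (ha : ContDiff ℝ (⊤ : ℕ∞) (Function.uncurry a))
    (hb : ContDiff ℝ (⊤ : ℕ∞) (Function.uncurry b))
    (hqa : ContDiff ℝ (⊤ : ℕ∞) (Function.uncurry qa))
    (hqb : ContDiff ℝ (⊤ : ℕ∞) (Function.uncurry qb))
    (h1 : ∀ t x, -pdt a t x - pdx qa t x = -Ra β (a t x) (b t x) + γ * a t x)
    (h2 : ∀ t x, -pdt b t x - pdx qb t x = -Rb β (a t x) (b t x) + γ * b t x)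
    (h3 : ∀ t x, pdx a t x = -(qa t x + α * qb t x) / (1 + α ^ 2))
    (h4 : ∀ t x, pdx b t x = -(-α * qa t x + qb t x) / (1 + α ^ 2)) :
    (∀ t x, pdt a t x = pdx (pdx a) t x - α * pdx (pdx b) t x
      + Ra β (a t x) (b t x) - γ * a t x) ∧
    (∀ t x, pdt b t x = α * pdx (pdx a) t x + pdx (pdx b) t x
      + Rb β (a t x) (b t x) - γ * b t x) ∧
    (∀ t x, pdtC (fun t x => (a t x : ℂ) + Complex.I * (b t x : ℂ)) t x
      = (1 + Complex.I * (α : ℂ))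
          * pdxC (pdxC (fun t x => (a t x : ℂ) + Complex.I * (b t x : ℂ))) t x
        + (1 - (γ : ℂ)) * ((a t x : ℂ) + Complex.I * (b t x : ℂ))
        - (1 + Complex.I * (β : ℂ))
          * (((‖(a t x : ℂ) + Complex.I * (b t x : ℂ)‖ : ℝ) : ℂ)) ^ 2
          * ((a t x : ℂ) + Complex.I * (b t x : ℂ))) := by
  have hα : (1 : ℝ) + α ^ 2 ≠ 0 := by positivity
  -- slice smoothness
  have sliceX : ∀ (f : ℝ → ℝ → ℝ), ContDiff ℝ (⊤ : ℕ∞) (Function.uncurry f) → ∀ t,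
      ContDiff ℝ ((⊤:ℕ∞):WithTop ℕ∞) (fun x => f t x) := fun f hf t =>
    (hf.comp (contDiff_const.prodMk contDiff_id)).of_le (by simp)
  have sliceT : ∀ (f : ℝ → ℝ → ℝ), ContDiff ℝ (⊤ : ℕ∞) (Function.uncurry f) → ∀ x,
      ContDiff ℝ ((⊤:ℕ∞):WithTop ℕ∞) (fun t => f t x) := fun f hf x =>
    (hf.comp (contDiff_id.prodMk contDiff_const)).of_le (by simp)
  have dAx : ∀ t, Differentiable ℝ (fun x => a t x) := fun t =>
    (sliceX a ha t).differentiable (by simp)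
  have dBx : ∀ t, Differentiable ℝ (fun x => b t x) := fun t =>
    (sliceX b hb t).differentiable (by simp)
  have dAt : ∀ x, Differentiable ℝ (fun t => a t x) := fun x =>
    (sliceT a ha x).differentiable (by simp)
  have dBt : ∀ x, Differentiable ℝ (fun t => b t x) := fun x =>
    (sliceT b hb x).differentiable (by simp)
  have dpAx : ∀ t, Differentiable ℝ (fun x => pdx a t x) := fun t =>
    ((contDiff_infty_iff_deriv.mp (sliceX a ha t)).2).differentiable (by simp)
  have dpBx : ∀ t, Differentiable ℝ (fun x => pdx b t x) := fun t =>
    ((contDiff_infty_iff_deriv.mp (sliceX b hb t)).2).differentiable (by simp)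
  -- express qa, qb in terms of pdx a, pdx b
  have hQa : ∀ t x, qa t x = -pdx a t x + α * pdx b t x := by
    intro t x; rw [h3, h4]; field_simp; ring
  have hQb : ∀ t x, qb t x = -α * pdx a t x - pdx b t x := by
    intro t x; rw [h3, h4]; field_simp; ring
  -- second derivatives
  have hpqa : ∀ t x, pdx qa t x = -pdx (pdx a) t x + α * pdx (pdx b) t x := by
    intro t x
    have heq : (fun y => qa t y) = fun y => -pdx a t y + α * pdx b t y := funext (hQa t)
    have H : HasDerivAt (fun y => -pdx a t y + α * pdx b t y)
        (-(pdx (pdx a) t x) + α * pdx (pdx b) t x) x :=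
      ((dpAx t x).hasDerivAt.neg).add ((dpBx t x).hasDerivAt.const_mul α)
    show deriv (fun y => qa t y) x = _
    rw [heq, H.deriv]
  have hpqb : ∀ t x, pdx qb t x = -α * pdx (pdx a) t x - pdx (pdx b) t x := by
    intro t x
    have heq : (fun y => qb t y) = fun y => -α * pdx a t y - pdx b t y := funext (hQb t)
    have H : HasDerivAt (fun y => -α * pdx a t y - pdx b t y)
        (-α * pdx (pdx a) t x - pdx (pdx b) t x) x :=
      ((dpAx t x).hasDerivAt.const_mul (-α)).sub (dpBx t x).hasDerivAt
    show deriv (fun y => qb t y) x = _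
    rw [heq, H.deriv]
  have part1 : ∀ t x, pdt a t x = pdx (pdx a) t x - α * pdx (pdx b) t x
      + Ra β (a t x) (b t x) - γ * a t x := by
    intro t x; have := h1 t x; rw [hpqa t x] at this; linarith
  have part2 : ∀ t x, pdt b t x = α * pdx (pdx a) t x + pdx (pdx b) t x
      + Rb β (a t x) (b t x) - γ * b t x := by
    intro t x; have := h2 t x; rw [hpqb t x] at this; linarith
  refine ⟨part1, part2, ?_⟩
  intro t x
  -- complex derivatives
  have hψt : pdtC (fun t x => (a t x : ℂ) + Complex.I * (b t x : ℂ)) t x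
      = (pdt a t x : ℂ) + Complex.I * (pdt b t x : ℂ) := by
    have h1' : HasDerivAt (fun s => ((a s x : ℂ))) ((pdt a t x : ℂ)) t :=
      ((dAt x t).hasDerivAt).ofReal_comp
    have h2' : HasDerivAt (fun s => Complex.I * ((b s x : ℂ)))
        (Complex.I * (pdt b t x : ℂ)) t :=
      (((dBt x t).hasDerivAt).ofReal_comp).const_mul Complex.I
    exact (h1'.add h2').deriv
  have hψx : ∀ t x, pdxC (fun t x => (a t x : ℂ) + Complex.I * (b t x : ℂ)) t x
      = (pdx a t x : ℂ) + Complex.I * (pdx b t x : ℂ) := by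
    intro t x
    have h1' : HasDerivAt (fun y => ((a t y : ℂ))) ((pdx a t x : ℂ)) x :=
      ((dAx t x).hasDerivAt).ofReal_comp
    have h2' : HasDerivAt (fun y => Complex.I * ((b t y : ℂ)))
        (Complex.I * (pdx b t x : ℂ)) x :=
      (((dBx t x).hasDerivAt).ofReal_comp).const_mul Complex.I
    exact (h1'.add h2').deriv
  have hψxx : pdxC (pdxC (fun t x => (a t x : ℂ) + Complex.I * (b t x : ℂ))) t x
      = (pdx (pdx a) t x : ℂ) + Complex.I * (pdx (pdx b) t x : ℂ) := by
    have heq : (fun y => pdxC (fun t x => (a t x : ℂ) + Complex.I * (b t x : ℂ)) t y)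
        = fun y => (pdx a t y : ℂ) + Complex.I * (pdx b t y : ℂ) := funext (hψx t)
    show deriv _ x = _
    rw [heq]
    have h1' : HasDerivAt (fun y => ((pdx a t y : ℂ))) ((pdx (pdx a) t x : ℂ)) x :=
      ((dpAx t x).hasDerivAt).ofReal_comp
    have h2' : HasDerivAt (fun y => Complex.I * ((pdx b t y : ℂ)))
        (Complex.I * (pdx (pdx b) t x : ℂ)) x :=
      (((dpBx t x).hasDerivAt).ofReal_comp).const_mul Complex.I
    exact (h1'.add h2').deriv
  have habs : ((‖(a t x : ℂ) + Complex.I * (b t x : ℂ)‖ : ℝ) : ℂ) ^ 2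
      = ((a t x ^ 2 + b t x ^ 2 : ℝ) : ℂ) := by
    rw [← Complex.ofReal_pow, Complex.sq_norm, Complex.normSq_apply]
    simp [Complex.add_re, Complex.add_im, Complex.ofReal_re, Complex.ofReal_im]
    push_cast; ring
  rw [hψt, hψxx, habs, part1 t x, part2 t x]
  simp only [Ra, Rb]
  push_cast
  ring_nf
  simp [Complex.ext_iff]
  constructor <;> ring
end

section
/- Let D_u, D_v > 0, ε > 0, a > 0, I ∈ ℝ be constants and let f : ℝ → ℝ be a smooth function. Let u, v : ℝ² → ℝ be smooth functions satisfying the FitzHugh–Nagumo system ∂u/∂t = D_u·∂²u/∂x² + f(u) − v + I and ∂v/∂t = D_v·∂²v/∂x² + ε·(u − a·v) everywhere. Define r := 0, s := 0, pu := 0, pv := 0, qu := −D_u·∂u/∂x, qv := −D_v·∂v/∂x, zt := 0, zx := 0. Then all the Hamilton–De Donder–Weyl equations of the FitzHugh–Nagumo two-contact system hold: (i) ∂r/∂t − ∂pu/∂x = −r·f'(u) − s·ε; (ii) −∂u/∂t − ∂qu/∂x = −(f(u) − v + I); (iii) ∂s/∂t − ∂pv/∂x = r + s·ε·a; (iv)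 −∂v/∂t − ∂qv/∂x = −ε·(u − a·v); (v) ∂u/∂x = −qu/D_u; (vi) ∂v/∂x = −qv/D_v; (vii) ∂zt/∂t + ∂zx/∂x = ½(−r·∂u/∂t + u·∂r/∂t − s·∂v/∂t + v·∂s/∂t) + pu·∂u/∂x + pv·∂v/∂x + qu·∂r/∂x + qv·∂s/∂x − h, where h = −(1/D_u)·pu·qu − (1/D_v)·pv·qv − r·(f(u) − v + I) − s·ε·(u − a·v). -/
lemma pdx_neg_const_mul (c : ℝ) (w : ℝ → ℝ → ℝ) (hw : ContDiff ℝ (⊤ : ℕ∞) (Function.uncurry w))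
    (t x : ℝ) : pdx (fun t x => c * pdx w t x) t x = c * pdx (pdx w) t x := by
  have hwt : ContDiff ℝ (⊤ : ℕ∞) (fun y => w t y) := by
    have := hw.comp (ContDiff.prodMk (contDiff_const (c := t)) contDiff_id)
    exact this
  have hder : Differentiable ℝ (fun y => pdx w t y) := by
    have h1 : ContDiff ℝ (⊤ : ℕ∞) (deriv (fun y => w t y)) :=
      (contDiff_infty_iff_deriv.mp (hwt.of_le (by simp))).2
    exact h1.differentiable (by simp)
  unfold pdx
  exact deriv_const_mul c (hder x)

/-- every solution of the FitzHugh--Nagumo system lifts, via the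
consistent reduction `r = s = pu = pv = 0`, `qu = -Du uₓ`, `qv = -Dv vₓ`,
`zt = zx = 0`, to a solution of the full two-contact HdDW system. -/
theorem fitzhugh_nagumo_consistent_reduction
    (Du Dv ε a I : ℝ) (hDu : 0 < Du) (hDv : 0 < Dv) (hε : 0 < ε) (ha : 0 < a)
    (f : ℝ → ℝ) (hf : ContDiff ℝ (⊤ : ℕ∞) f)
    (u v : ℝ → ℝ → ℝ)
    (hu : ContDiff ℝ (⊤ : ℕ∞) (Function.uncurry u))
    (hv : ContDiff ℝ (⊤ : ℕ∞) (Function.uncurry v))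
    (hsol1 : ∀ t x, pdt u t x = Du * pdx (pdx u) t x + f (u t x) - v t x + I)
    (hsol2 : ∀ t x, pdt v t x = Dv * pdx (pdx v) t x + ε * (u t x - a * v t x)) :
    let r : ℝ → ℝ → ℝ := fun _ _ => 0
    let s : ℝ → ℝ → ℝ := fun _ _ => 0
    let pu : ℝ → ℝ → ℝ := fun _ _ => 0
    let pv : ℝ → ℝ → ℝ := fun _ _ => 0
    let qu : ℝ → ℝ → ℝ := fun t x => -Du * pdx u t x
    let qv : ℝ → ℝ → ℝ := fun t x => -Dv * pdx v t x
    let zt : ℝ → ℝ → ℝ := fun _ _ => 0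
    let zx : ℝ → ℝ → ℝ := fun _ _ => 0
    (∀ t x, pdt r t x - pdx pu t x = -(r t x) * deriv f (u t x) - s t x * ε) ∧
    (∀ t x, -pdt u t x - pdx qu t x = -(f (u t x) - v t x + I)) ∧
    (∀ t x, pdt s t x - pdx pv t x = r t x + s t x * ε * a) ∧
    (∀ t x, -pdt v t x - pdx qv t x = -ε * (u t x - a * v t x)) ∧
    (∀ t x, pdx u t x = -(qu t x) / Du) ∧
    (∀ t x, pdx v t x = -(qv t x) / Dv) ∧
    (∀ t x, pdt zt t x + pdx zx t x
      = 2⁻¹ * (-(r t x) * pdt u t x + u t x * pdt r t x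
          - s t x * pdt v t x + v t x * pdt s t x)
        + pu t x * pdx u t x + pv t x * pdx v t x
        + qu t x * pdx r t x + qv t x * pdx s t x
        - (-(1 / Du) * pu t x * qu t x - (1 / Dv) * pv t x * qv t x
            - r t x * (f (u t x) - v t x + I) - s t x * ε * (u t x - a * v t x))) := by
  intro r s pu pv qu qv zt zx
  have hpdtc : ∀ t x : ℝ, pdt (fun _ _ => (0:ℝ)) t x = 0 := by
    intro t x; simp [pdt]
  have hpdxc : ∀ t x : ℝ, pdx (fun _ _ => (0:ℝ)) t x = 0 := by
    intro t x; simp [pdx]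
  have hqu : ∀ t x, pdx qu t x = -Du * pdx (pdx u) t x := fun t x =>
    pdx_neg_const_mul (-Du) u hu t x
  have hqv : ∀ t x, pdx qv t x = -Dv * pdx (pdx v) t x := fun t x =>
    pdx_neg_const_mul (-Dv) v hv t x
  refine ⟨fun t x => by simp [r, s, pu, hpdtc, hpdxc],
    fun t x => by rw [hqu t x, hsol1 t x]; ring,
    fun t x => by simp [r, s, pv, hpdtc, hpdxc],
    fun t x => by rw [hqv t x, hsol2 t x]; ring,
    fun t x => by simp only [qu, neg_mul, neg_neg]; field_simp,
    fun t x => by simp only [qv, neg_mul, neg_neg]; field_simp,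
    fun t x => by simp [r, s, pu, pv, zt, zx, hpdtc, hpdxc]⟩
end

section
/- Let D_u, D_v > 0, ε > 0, a > 0, I, c₀ ∈ ℝ be constants and set f(u) := u/a + c₀. Let u, v, r, s, pu, pv : ℝ² → ℝ be smooth functions of (t,x) satisfying the auxiliary-field equations of the FitzHugh–Nagumo two-contact Hamilton–De Donder–Weyl system: ∂r/∂t − ∂pu/∂x = −r/a − s·ε and ∂s/∂t − ∂pv/∂x = r + s·ε·a at every point. Then the conservation law ∂/∂t ( r + s/a ) − ∂/∂x ( pu + pv/a ) = 0 holds at every point of ℝ². -/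
lemma slice_t_diff {g : ℝ → ℝ → ℝ} (hg : ContDiff ℝ (⊤ : ℕ∞) (Function.uncurry g)) (x : ℝ) :
    Differentiable ℝ (fun t => g t x) := by
  have : Differentiable ℝ (Function.uncurry g) := hg.differentiable (by simp)
  exact fun t => by have h := (this (t, x)).comp t ((differentiableAt_id.prodMk (differentiableAt_const x : DifferentiableAt ℝ (fun _ : ℝ => x) t))); exact h

lemma slice_x_diff {g : ℝ → ℝ → ℝ} (hg : ContDiff ℝ (⊤ : ℕ∞) (Function.uncurry g)) (t : ℝ) :
    Differentiable ℝ (fun y => g t y) := by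
  have : Differentiable ℝ (Function.uncurry g) := hg.differentiable (by simp)
  exact fun y => by have h := (this (t, y)).comp y (((differentiableAt_const t : DifferentiableAt ℝ (fun _ : ℝ => t) y)).prodMk differentiableAt_id); exact h

/-- the conservation law associated with the infinitesimal
two-contact symmetry of the affine FitzHugh--Nagumo Hamiltonian, with
`f(u) = u/a + c₀`: the current `(r + s/a, -(pu + pv/a))` is divergence-free
along the auxiliary-field HdDW equations. -/
theorem fitzhugh_nagumo_conservation_law
    (Du Dv ε a I c₀ : ℝ) (hDu : 0 < Du) (hDv : 0 < Dv) (hε : 0 < ε) (ha : 0 < a)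
    (f : ℝ → ℝ) (hfdef : ∀ w, f w = w / a + c₀)
    (u v r s pu pv : ℝ → ℝ → ℝ)
    (hu : ContDiff ℝ (⊤ : ℕ∞) (Function.uncurry u))
    (hv : ContDiff ℝ (⊤ : ℕ∞) (Function.uncurry v))
    (hr : ContDiff ℝ (⊤ : ℕ∞) (Function.uncurry r))
    (hs : ContDiff ℝ (⊤ : ℕ∞) (Function.uncurry s))
    (hpu : ContDiff ℝ (⊤ : ℕ∞) (Function.uncurry pu))
    (hpv : ContDiff ℝ (⊤ : ℕ∞) (Function.uncurry pv))
    (h1 : ∀ t x, pdt r t x - pdx pu t x = -(r t x) / a - s t x * ε)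
    (h2 : ∀ t x, pdt s t x - pdx pv t x = r t x + s t x * ε * a) :
    ∀ t x, pdt (fun t x => r t x + s t x / a) t x
      - pdx (fun t x => pu t x + pv t x / a) t x = 0 := by
  intro t x
  have hrd := (slice_t_diff hr x) t
  have hsd := (slice_t_diff hs x) t
  have hpud := (slice_x_diff hpu t) x
  have hpvd := (slice_x_diff hpv t) x
  have e1 : pdt (fun t x => r t x + s t x / a) t x = pdt r t x + pdt s t x / a := by
    simp only [pdt]
    rw [deriv_fun_add hrd (hsd.div_const a), deriv_div_const]
  have e2 : pdx (fun t x => pu t x + pv t x / a) t x = pdx pu t x + pdx pv t x / a := by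
    simp only [pdx]
    rw [deriv_fun_add hpud (hpvd.div_const a), deriv_div_const]
  have A := h1 t x
  have B := h2 t x
  rw [e1, e2]
  have hane : a ≠ 0 := ha.ne'
  field_simp at A B ⊢
  nlinarith [A, B]
end

section
/- Let n, k ≥ 1, let g : ℝⁿ × ℝ^{n×k} → ℝ be smooth, let A₁,…,A_k ∈ ℝ, and let λ₁,…,λ_k be non-negative integers; set h(q, p, z) := g(q, p) + Σ_{α=1}^{k} A_α·(z^α)^{λ_α}. Suppose P : ℝⁿ × ℝ^{n×k} → ℝ^{n×k} is a smooth map inverting the fibre derivative of g, i.e., P( q, (∂g/∂p_i^α(q,p))_{i,α} ) = p for every (q,p). Define R(z, μ) := μ·z^{μ−1} for a positive integer μ and R(z, 0) := 0. Let D ⊆ ℝᵏ be open and let q : D → ℝⁿ, p : D → ℝ^{n×k}, z : D → ℝᵏ be smooth maps satisfying the Hamilton–De Donder–Weyl equations: ∂q^i/∂t^α = ∂h/∂p_i^α (q(t), p(t), z(t)) for all i, α, and Σ_{α=1}^{k} ∂p_i^α/∂t^α = −( ∂h/∂q^i + Σ_{α=1}^{k} p_i^α · ∂h/∂z^α )(q(t),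 p(t), z(t)) for all i. Then p(t) = P(q(t), ∂q/∂t(t)) for all t ∈ D, and the map q satisfies the second-order system of PDEs: Σ_{α=1}^{k} ∂/∂t^α [ P_i^α( q(t), ∂q/∂t(t) ) ] + ∂g/∂q^i ( q(t), P( q(t), ∂q/∂t(t) ) ) + Σ_{α=1}^{k} R( z^α(t), λ_α )·A_α·P_i^α( q(t), ∂q/∂t(t) ) = 0 for all i = 1,…,n and all t ∈ D. -/
/-- The base space `ℝⁿ × ℝ^{n×k}` of positions and momenta. -/
abbrev QPSpace (n k : ℕ) : Type := (Fin n → ℝ) × (Fin n → Fin k → ℝ)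

/-- The full phase space `ℝⁿ × ℝ^{n×k} × ℝᵏ` of positions, momenta, and
dissipative variables. -/
abbrev PhaseSpace (n k : ℕ) : Type :=
  (Fin n → ℝ) × (Fin n → Fin k → ℝ) × (Fin k → ℝ)

/-- The coefficient `R(z,μ) = μ·z^{μ-1}` for a positive integer `μ`, with
`R(z,0) = 0`. -/
noncomputable def Rcoef (z : ℝ) (μ : ℕ) : ℝ :=
  if μ = 0 then 0 else (μ : ℝ) * z ^ (μ - 1)

/-- The Hamiltonian `h(q,p,z) = g(q,p) + Σ_α A_α (z^α)^{λ_α}`. -/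
noncomputable def ham {n k : ℕ} (g : QPSpace n k → ℝ) (A : Fin k → ℝ)
    (lam : Fin k → ℕ) : PhaseSpace n k → ℝ :=
  fun w => g (w.1, w.2.1) + ∑ α : Fin k, A α * (w.2.2 α) ^ (lam α)

lemma Rcoef_eq (z : ℝ) (μ : ℕ) : Rcoef z μ = (μ : ℝ) * z ^ (μ - 1) := by
  unfold Rcoef; split <;> simp_all

/-- The projection `(q,p,z) ↦ (q,p)` as a continuous linear map. -/
noncomputable def Lqp (n k : ℕ) : PhaseSpace n k →L[ℝ] QPSpace n k :=
  (ContinuousLinearMap.fst ℝ (Fin n → ℝ) ((Fin n → Fin k → ℝ) × (Fin k → ℝ))).prod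
    ((ContinuousLinearMap.fst ℝ (Fin n → Fin k → ℝ) (Fin k → ℝ)).comp
      (ContinuousLinearMap.snd ℝ (Fin n → ℝ) ((Fin n → Fin k → ℝ) × (Fin k → ℝ))))

/-- The projection `(q,p,z) ↦ z^α` as a continuous linear map. -/
noncomputable def Zproj (n k : ℕ) (α : Fin k) : PhaseSpace n k →L[ℝ] ℝ :=
  (ContinuousLinearMap.proj α).comp
    ((ContinuousLinearMap.snd ℝ (Fin n → Fin k → ℝ) (Fin k → ℝ)).comp
      (ContinuousLinearMap.snd ℝ (Fin n → ℝ) ((Fin n → Fin k → ℝ) × (Fin k → ℝ))))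

@[simp] lemma Lqp_apply {n k : ℕ} (v : PhaseSpace n k) : Lqp n k v = (v.1, v.2.1) := rfl
@[simp] lemma Zproj_apply {n k : ℕ} (α : Fin k) (v : PhaseSpace n k) :
    Zproj n k α v = v.2.2 α := rfl

lemma ham_hasFDerivAt {n k : ℕ} (g : QPSpace n k → ℝ) (hg : ContDiff ℝ (⊤ : ℕ∞) g)
    (A : Fin k → ℝ) (lam : Fin k → ℕ) (w : PhaseSpace n k) :
    HasFDerivAt (ham g A lam)
      ((fderiv ℝ g (w.1, w.2.1)).comp (Lqp n k)
        + ∑ α : Fin k, (A α * Rcoef (w.2.2 α) (lam α)) • Zproj n k α) w := by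
  have h1 : HasFDerivAt (fun v : PhaseSpace n k => g (v.1, v.2.1))
      ((fderiv ℝ g (w.1, w.2.1)).comp (Lqp n k)) w := by
    have hgd : HasFDerivAt g (fderiv ℝ g (w.1, w.2.1)) (Lqp n k w) :=
      (hg.differentiable (by simp) (w.1, w.2.1)).hasFDerivAt
    exact hgd.comp w (Lqp n k).hasFDerivAt
  have h2 : ∀ α : Fin k, HasFDerivAt (fun v : PhaseSpace n k => A α * (v.2.2 α) ^ (lam α))
      ((A α * Rcoef (w.2.2 α) (lam α)) • Zproj n k α) w := by
    intro α
    have hd : HasDerivAt (fun x : ℝ => A α * x ^ (lam α))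
        (A α * ((lam α : ℝ) * (w.2.2 α) ^ (lam α - 1))) (Zproj n k α w) :=
      (hasDerivAt_pow (lam α) (w.2.2 α)).const_mul (A α)
    have := hd.comp_hasFDerivAt w (Zproj n k α).hasFDerivAt
    rw [Rcoef_eq]
    exact this
  have hsum := HasFDerivAt.fun_sum (fun α (_ : α ∈ Finset.univ) => h2 α)
  exact h1.add hsum

lemma fderiv_ham_apply {n k : ℕ} (g : QPSpace n k → ℝ) (hg : ContDiff ℝ (⊤ : ℕ∞) g)
    (A : Fin k → ℝ) (lam : Fin k → ℕ) (w : PhaseSpace n k) (v : PhaseSpace n k) :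
    fderiv ℝ (ham g A lam) w v
      = fderiv ℝ g (w.1, w.2.1) (v.1, v.2.1)
        + ∑ α : Fin k, A α * Rcoef (w.2.2 α) (lam α) * v.2.2 α := by
  rw [(ham_hasFDerivAt g hg A lam w).fderiv]
  simp [smul_eq_mul]

/-- for a Hamiltonian polynomial in the dissipative variables with
globally invertible fibre derivative (inverse `P`), every solution of the
Hamilton--De Donder--Weyl equations has momenta `p = P(q, ∂q/∂t)` and its
position part satisfies the reconstructed second-order system of PDEs. -/
theorem HdDW_polynomial_dissipative_second_order
    (n k : ℕ) (hn : 1 ≤ n) (hk : 1 ≤ k)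
    (g : QPSpace n k → ℝ) (hg : ContDiff ℝ (⊤ : ℕ∞) g)
    (A : Fin k → ℝ) (lam : Fin k → ℕ)
    (P : QPSpace n k → (Fin n → Fin k → ℝ)) (hP : ContDiff ℝ (⊤ : ℕ∞) P)
    (hPinv : ∀ (q : Fin n → ℝ) (p : Fin n → Fin k → ℝ),
      P (q, fun i α => fderiv ℝ g (q, p) (0, Pi.single i (Pi.single α 1))) = p)
    (D : Set (Fin k → ℝ)) (hD : IsOpen D)
    (q : (Fin k → ℝ) → (Fin n → ℝ))
    (p : (Fin k → ℝ) → (Fin n → Fin k → ℝ))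
    (z : (Fin k → ℝ) → (Fin k → ℝ))
    (hq : ContDiffOn ℝ (⊤ : ℕ∞) q D) (hp : ContDiffOn ℝ (⊤ : ℕ∞) p D) (hz : ContDiffOn ℝ (⊤ : ℕ∞) z D)
    (hHdDW1 : ∀ t ∈ D, ∀ (i : Fin n) (α : Fin k),
      fderiv ℝ (fun s => q s i) t (Pi.single α 1)
        = fderiv ℝ (ham g A lam) (q t, p t, z t) (0, Pi.single i (Pi.single α 1), 0))
    (hHdDW2 : ∀ t ∈ D, ∀ i : Fin n,
      (∑ α : Fin k, fderiv ℝ (fun s => p s i α) t (Pi.single α 1))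
        = -(fderiv ℝ (ham g A lam) (q t, p t, z t) (Pi.single i 1, 0, 0)
            + ∑ α : Fin k,
                p t i α * fderiv ℝ (ham g A lam) (q t, p t, z t) (0, 0, Pi.single α 1))) :
    (∀ t ∈ D, p t
      = P (q t, fun i β => fderiv ℝ (fun s => q s i) t (Pi.single β 1))) ∧
    (∀ t ∈ D, ∀ i : Fin n,
      (∑ α : Fin k, fderiv ℝ
          (fun s => P (q s, fun j β => fderiv ℝ (fun s' => q s' j) s (Pi.single β 1)) i α)
          t (Pi.single α 1))
        + fderiv ℝ g
            (q t, P (q t, fun j β => fderiv ℝ (fun s' => q s' j) t (Pi.single β 1)))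
            (Pi.single i 1, 0)
        + (∑ α : Fin k, Rcoef (z t α) (lam α) * A α
            * P (q t, fun j β => fderiv ℝ (fun s' => q s' j) t (Pi.single β 1)) i α)
      = 0) := by
  have part1 : ∀ t ∈ D, p t
      = P (q t, fun i β => fderiv ℝ (fun s => q s i) t (Pi.single β 1)) := by
    intro t ht
    have key : (fun i β => fderiv ℝ (fun s => q s i) t (Pi.single β 1))
        = fun i β => fderiv ℝ g (q t, p t) (0, Pi.single i (Pi.single β 1)) := by
      funext i β
      rw [hHdDW1 t ht i β, fderiv_ham_apply g hg]
      simp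
    rw [key]
    exact (hPinv (q t) (p t)).symm
  refine ⟨part1, ?_⟩
  intro t ht i
  have hev : ∀ α : Fin k,
      fderiv ℝ (fun s =>
          P (q s, fun j β => fderiv ℝ (fun s' => q s' j) s (Pi.single β 1)) i α)
        t (Pi.single α 1)
      = fderiv ℝ (fun s => p s i α) t (Pi.single α 1) := by
    intro α
    have heq : (fun s =>
        P (q s, fun j β => fderiv ℝ (fun s' => q s' j) s (Pi.single β 1)) i α)
        =ᶠ[nhds t] (fun s => p s i α) := by
      filter_upwards [hD.mem_nhds ht] with s hs
      rw [← part1 s hs]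
    rw [heq.fderiv_eq]
  rw [← part1 t ht]
  have hsum : (∑ α : Fin k, fderiv ℝ
      (fun s => P (q s, fun j β => fderiv ℝ (fun s' => q s' j) s (Pi.single β 1)) i α)
      t (Pi.single α 1))
      = ∑ α : Fin k, fderiv ℝ (fun s => p s i α) t (Pi.single α 1) :=
    Finset.sum_congr rfl fun α _ => hev α
  rw [hsum, hHdDW2 t ht i]
  have e1 : fderiv ℝ (ham g A lam) (q t, p t, z t) (Pi.single i 1, 0, 0)
      = fderiv ℝ g (q t, p t) (Pi.single i 1, 0) := by
    rw [fderiv_ham_apply g hg]; simp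
  have e2 : ∀ α : Fin k, fderiv ℝ (ham g A lam) (q t, p t, z t) (0, 0, Pi.single α 1)
      = A α * Rcoef (z t α) (lam α) := by
    intro α
    rw [fderiv_ham_apply g hg]
    simp [Pi.single_apply, Finset.sum_ite_eq']
    exact (fderiv ℝ g (q t, p t)).map_zero
  rw [e1]
  have e3 : (∑ α : Fin k, p t i α
        * fderiv ℝ (ham g A lam) (q t, p t, z t) (0, 0, Pi.single α 1))
      = ∑ α : Fin k, Rcoef (z t α) (lam α) * A α * p t i α := by
    refine Finset.sum_congr rfl fun α _ => ?_
    rw [e2 α]; ring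
  rw [e3]
  ring
end
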